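/- arXiv:2012.14960 — 3 statements merged into one kernel-verified Lean document; each statement's English description precedes it below -/
import Mathlib

section
/- Let S be a set of polynomials with rational coefficients, each of degree at least 2, such that: (height controlled) there exists C ≥ 0 with |h(φ(x)) − deg(φ)·h(x)| ≤ C for every φ ∈ S and every x ∈ ℚ; and (uniformly log-discrete) there exists δ > 0 with |log(deg φ) − log(deg ψ)| > δ for all distinct φ, ψ ∈ S. Then there exist a real number b > 0 and a real number B₀ such that for every P ∈ ℚ with H(P) > B₀ there is a constant κ > 0 (depending on P and S) with #{Q ∈ Orb_S(P) : H(Q) ≤ B} ≤ κ·(log B)^b for all real B ≥ 3. -/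
open Polynomial

/-- Multiplicative Weil height of a rational number: `H(p/q) = max(|p|, q)`. -/
noncomputable def ratH (x : ℚ) : ℝ := max |(x.num : ℝ)| (x.den : ℝ)

/-- Logarithmic Weil height of a rational number. -/
noncomputable def rath (x : ℚ) : ℝ := Real.log (ratH x)

/-- Evaluation of a finite list of polynomials `[φ₁, …, φₘ]` at `P`:
`φ₁(φ₂(⋯φₘ(P)⋯))`, the empty list acting as the identity. -/
def applyList (L : List (Polynomial ℚ)) (P : ℚ) : ℚ :=
  L.foldr (fun φ x => φ.eval x) P

/-- The orbit of `P` under all finite compositions of elements of `S`. -/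
def orb (S : Set (Polynomial ℚ)) (P : ℚ) : Set ℚ :=
  {Q | ∃ L : List (Polynomial ℚ), (∀ φ ∈ L, φ ∈ S) ∧ applyList L P = Q}

lemma one_le_ratH (x : ℚ) : 1 ≤ ratH x := by
  have : (1 : ℝ) ≤ (x.den : ℝ) := by exact_mod_cast x.pos
  exact this.trans (le_max_right _ _)

/-- Lists of elements of `S` of length ≤ m whose degree product is ≤ X. -/
def Lset (S : Set (Polynomial ℚ)) (m : ℕ) (X : ℝ) : Set (List (Polynomial ℚ)) :=
  {L | L.length ≤ m ∧ (∀ φ ∈ L, φ ∈ S) ∧ (L.map (fun φ => ((φ.natDegree : ℝ)))).prod ≤ X}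

lemma prod_ge (S : Set (Polynomial ℚ)) (hdeg : ∀ φ ∈ S, 2 ≤ φ.natDegree) :
    ∀ L : List (Polynomial ℚ), (∀ φ ∈ L, φ ∈ S) →
      (2 : ℝ) ^ L.length ≤ (L.map (fun φ => ((φ.natDegree : ℝ)))).prod := by
  intro L
  induction L with
  | nil => simp
  | cons φ L ih =>
    intro h
    have hφ : (2 : ℝ) ≤ (φ.natDegree : ℝ) := by
      exact_mod_cast hdeg φ (h φ (List.mem_cons_self))
    have ih' := ih (fun ψ hψ => h ψ (List.mem_cons_of_mem _ hψ))
    simp only [List.map_cons, List.prod_cons, List.length_cons, pow_succ]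
    calc (2:ℝ) ^ L.length * 2 ≤ (L.map (fun φ => ((φ.natDegree : ℝ)))).prod * (φ.natDegree : ℝ) := by
          apply mul_le_mul ih' hφ (by norm_num) (le_trans (by positivity) ih')
      _ = (φ.natDegree : ℝ) * (L.map (fun φ => ((φ.natDegree : ℝ)))).prod := mul_comm _ _

lemma one_le_prod (S : Set (Polynomial ℚ)) (hdeg : ∀ φ ∈ S, 2 ≤ φ.natDegree)
    (L : List (Polynomial ℚ)) (h : ∀ φ ∈ L, φ ∈ S) :
    (1 : ℝ) ≤ (L.map (fun φ => ((φ.natDegree : ℝ)))).prod :=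
  le_trans (one_le_pow₀ (by norm_num)) (prod_ge S hdeg L h)

lemma Lset_empty (S : Set (Polynomial ℚ)) (hdeg : ∀ φ ∈ S, 2 ≤ φ.natDegree)
    (m : ℕ) {X : ℝ} (hX : X < 1) : Lset S m X = ∅ := by
  ext L
  simp only [Lset, Set.mem_setOf_eq, Set.mem_empty_iff_false, iff_false, not_and]
  intro _ hmem
  exact fun hp => absurd (le_trans (one_le_prod S hdeg L hmem) hp) (not_le.2 hX)

lemma sum_cube_aux : ∀ n : ℕ, 1 ≤ n →
    (∑ d ∈ Finset.Icc 2 n, (1 : ℝ) / (d : ℝ) ^ 3) + 1 / ((n : ℝ) * ((n : ℝ) + 1)) ≤ 1 / 2 := by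
  intro n hn
  induction n, hn using Nat.le_induction with
  | base => norm_num
  | succ n hn ih =>
    rw [Finset.sum_Icc_succ_top (by omega)]
    have hx : (1 : ℝ) ≤ (n : ℝ) := by exact_mod_cast hn
    have key : (1 : ℝ) / ((n : ℝ) + 1) ^ 3 + 1 / (((n : ℝ) + 1) * ((n : ℝ) + 1 + 1))
        ≤ 1 / ((n : ℝ) * ((n : ℝ) + 1)) := by
      rw [div_add_div _ _ (by positivity) (by positivity), div_le_div_iff₀ (by positivity) (by positivity)]
      ring_nf
      nlinarith [sq_nonneg ((n:ℝ)), sq_nonneg ((n:ℝ)+1), hx]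
    push_cast
    linarith

lemma sum_cube (n : ℕ) : (∑ d ∈ Finset.Icc 2 n, (1 : ℝ) / (d : ℝ) ^ 3) ≤ 1 / 2 := by
  rcases Nat.eq_zero_or_pos n with h | h
  · subst h; norm_num
  · have := sum_cube_aux n h
    have hpos : 0 < (n : ℝ) * ((n : ℝ) + 1) := by positivity
    have : (0:ℝ) < 1 / ((n : ℝ) * ((n : ℝ) + 1)) := by positivity
    linarith [sum_cube_aux n h]

lemma count (S : Set (Polynomial ℚ)) (hdeg : ∀ φ ∈ S, 2 ≤ φ.natDegree)
    (hinj : Set.InjOn Polynomial.natDegree S) :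
    ∀ m : ℕ, ∀ X : ℝ, (Lset S m X).Finite ∧
      (0 < X → ((Lset S m X).ncard : ℝ) ≤ 2 * X ^ 3) := by
  intro m
  induction m with
  | zero =>
    intro X
    rcases lt_or_ge X 1 with hX | hX
    · rw [Lset_empty S hdeg 0 hX]
      exact ⟨Set.finite_empty, fun _ => by simp; positivity⟩
    · have hsub : Lset S 0 X ⊆ {[]} := by
        intro L hL
        have : L.length = 0 := Nat.le_zero.mp hL.1
        simp [List.length_eq_zero_iff.mp this]
      refine ⟨(Set.finite_singleton _).subset hsub, fun hX0 => ?_⟩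
      have h1 : (Lset S 0 X).ncard ≤ 1 := by
        simpa using Set.ncard_le_ncard hsub (Set.finite_singleton _)
      have hX3 : (1:ℝ) ≤ X ^ 3 := one_le_pow₀ hX
      have : (1:ℝ) ≤ 2 * X ^ 3 := by linarith
      calc ((Lset S 0 X).ncard : ℝ) ≤ 1 := by exact_mod_cast h1
        _ ≤ 2 * X ^ 3 := this
  | succ m ih =>
    intro X
    rcases lt_or_ge X 1 with hX | hX
    · rw [Lset_empty S hdeg _ hX]
      refine ⟨Set.finite_empty, fun hX0 => by simp; positivity⟩
    classical
    -- the finite set of possible heads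
    have hFfin : {φ ∈ S | (φ.natDegree : ℝ) ≤ X}.Finite := by
      apply Set.Finite.of_finite_image (f := Polynomial.natDegree)
      · apply (Set.finite_Iic (⌊X⌋₊)).subset
        rintro n ⟨φ, hφ, rfl⟩
        exact Nat.le_floor hφ.2
      · exact hinj.mono (fun φ hφ => hφ.1)
    set Ffin := hFfin.toFinset with hFdef
    set T : Finset (List (Polynomial ℚ)) :=
      insert [] (Ffin.biUnion (fun φ =>
        ((ih (X / (φ.natDegree : ℝ))).1.toFinset).image (fun L => φ :: L))) with hT
    have hsub : Lset S (m+1) X ⊆ ↑T := by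
      rintro L ⟨hlen, hmem, hprod⟩
      cases L with
      | nil => simp [hT]
      | cons φ L' =>
        have hφS : φ ∈ S := hmem φ (List.mem_cons_self)
        have hL'mem : ∀ ψ ∈ L', ψ ∈ S := fun ψ hψ => hmem ψ (List.mem_cons_of_mem _ hψ)
        have hd2 : (2 : ℝ) ≤ (φ.natDegree : ℝ) := by exact_mod_cast hdeg φ hφS
        have hprod' : (φ.natDegree : ℝ) * (L'.map (fun φ => ((φ.natDegree : ℝ)))).prod ≤ X := by
          simpa using hprod
        have hpL' : (1:ℝ) ≤ (L'.map (fun φ => ((φ.natDegree : ℝ)))).prod := one_le_prod S hdeg L' hL'mem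
        have hdX : (φ.natDegree : ℝ) ≤ X := by nlinarith
        have hφF : φ ∈ Ffin := by rw [hFdef, Set.Finite.mem_toFinset]; exact ⟨hφS, hdX⟩
        have hL' : L' ∈ Lset S m (X / (φ.natDegree : ℝ)) := by
          refine ⟨Nat.succ_le_succ_iff.mp hlen, hL'mem, ?_⟩
          rw [le_div_iff₀ (by linarith)]
          nlinarith
        simp only [hT, Finset.coe_insert, Set.mem_insert_iff, Finset.coe_biUnion,
          Set.mem_iUnion, Finset.coe_image, Set.mem_image]
        right
        exact ⟨φ, hφF, L', (ih _).1.mem_toFinset.mpr hL', rfl⟩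
    refine ⟨T.finite_toSet.subset hsub, fun hX0 => ?_⟩
    have hcard : (Lset S (m+1) X).ncard ≤ T.card := by
      have := Set.ncard_le_ncard hsub T.finite_toSet
      rwa [Set.ncard_coe_finset] at this
    have hTcard : T.card ≤ 1 + ∑ φ ∈ Ffin, ((ih (X / (φ.natDegree : ℝ))).1.toFinset).card := by
      calc T.card ≤ (Ffin.biUnion (fun φ =>
            ((ih (X / (φ.natDegree : ℝ))).1.toFinset).image (fun L => φ :: L))).card + 1 :=
            Finset.card_insert_le _ _
        _ ≤ (∑ φ ∈ Ffin, (((ih (X / (φ.natDegree : ℝ))).1.toFinset).image (fun L => φ :: L)).card) + 1 := by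
            exact Nat.add_le_add_right Finset.card_biUnion_le 1
        _ ≤ (∑ φ ∈ Ffin, ((ih (X / (φ.natDegree : ℝ))).1.toFinset).card) + 1 := by
            exact Nat.add_le_add_right (Finset.sum_le_sum fun φ _ => Finset.card_image_le) 1
        _ = 1 + ∑ φ ∈ Ffin, ((ih (X / (φ.natDegree : ℝ))).1.toFinset).card := by ring
    -- real bound on each summand
    have hsummand : ∀ φ ∈ Ffin,
        (((ih (X / (φ.natDegree : ℝ))).1.toFinset).card : ℝ) ≤ 2 * X ^ 3 * (1 / (φ.natDegree : ℝ) ^ 3) := by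
      intro φ hφ
      rw [hFdef, Set.Finite.mem_toFinset] at hφ
      have hd2 : (2 : ℝ) ≤ (φ.natDegree : ℝ) := by exact_mod_cast hdeg φ hφ.1
      have hdpos : (0:ℝ) < (φ.natDegree : ℝ) := by linarith
      have hXd : 0 < X / (φ.natDegree : ℝ) := by positivity
      have hbd := (ih (X / (φ.natDegree : ℝ))).2 hXd
      have hcardeq : ((ih (X / (φ.natDegree : ℝ))).1.toFinset).card
          = (Lset S m (X / (φ.natDegree : ℝ))).ncard :=
        (Set.ncard_eq_toFinset_card _ (ih (X / (φ.natDegree : ℝ))).1).symm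
      rw [hcardeq]
      calc ((Lset S m (X / (φ.natDegree : ℝ))).ncard : ℝ) ≤ 2 * (X / (φ.natDegree : ℝ)) ^ 3 := hbd
        _ = 2 * X ^ 3 * (1 / (φ.natDegree : ℝ) ^ 3) := by rw [div_pow]; ring
    have hsum : (∑ φ ∈ Ffin, (1 : ℝ) / (φ.natDegree : ℝ) ^ 3) ≤ 1 / 2 := by
      have himg : ∑ φ ∈ Ffin, (1 : ℝ) / (φ.natDegree : ℝ) ^ 3
          = ∑ d ∈ Ffin.image Polynomial.natDegree, (1 : ℝ) / (d : ℝ) ^ 3 := by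
        rw [Finset.sum_image]
        intro x hx y hy hxy
        rw [hFdef, Finset.mem_coe, Set.Finite.mem_toFinset] at hx hy
        exact hinj hx.1 hy.1 hxy
      rw [himg]
      calc ∑ d ∈ Ffin.image Polynomial.natDegree, (1 : ℝ) / (d : ℝ) ^ 3
          ≤ ∑ d ∈ Finset.Icc 2 ⌊X⌋₊, (1 : ℝ) / (d : ℝ) ^ 3 := by
            apply Finset.sum_le_sum_of_subset_of_nonneg
            · intro d hd
              rw [Finset.mem_image] at hd
              obtain ⟨φ, hφ, rfl⟩ := hd
              rw [hFdef, Set.Finite.mem_toFinset] at hφ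
              exact Finset.mem_Icc.mpr ⟨hdeg φ hφ.1, Nat.le_floor hφ.2⟩
            · intro i _ _; positivity
        _ ≤ 1 / 2 := sum_cube _
    calc ((Lset S (m+1) X).ncard : ℝ) ≤ (T.card : ℝ) := by exact_mod_cast hcard
      _ ≤ 1 + ∑ φ ∈ Ffin, (((ih (X / (φ.natDegree : ℝ))).1.toFinset).card : ℝ) := by
          exact_mod_cast hTcard
      _ ≤ 1 + ∑ φ ∈ Ffin, 2 * X ^ 3 * (1 / (φ.natDegree : ℝ) ^ 3) :=
          add_le_add_right (Finset.sum_le_sum hsummand) 1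
      _ = 1 + 2 * X ^ 3 * ∑ φ ∈ Ffin, (1 : ℝ) / (φ.natDegree : ℝ) ^ 3 := by
          rw [Finset.mul_sum]
      _ ≤ 1 + 2 * X ^ 3 * (1 / 2) := by
          have hX3 : (0:ℝ) ≤ 2 * X ^ 3 := by positivity
          nlinarith [hsum]
      _ ≤ 2 * X ^ 3 := by
          have hX3 : (1:ℝ) ≤ X ^ 3 := one_le_pow₀ hX
          linarith

lemma growth (S : Set (Polynomial ℚ)) (C : ℝ) (hC0 : 0 ≤ C)
    (hdeg : ∀ φ ∈ S, 2 ≤ φ.natDegree)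
    (hh : ∀ φ ∈ S, ∀ x : ℚ, |rath (φ.eval x) - (φ.natDegree : ℝ) * rath x| ≤ C)
    (P : ℚ) : ∀ L : List (Polynomial ℚ), (∀ φ ∈ L, φ ∈ S) →
    (L.map (fun φ => ((φ.natDegree : ℝ)))).prod * (rath P - C) ≤ rath (applyList L P) - C := by
  intro L
  induction L with
  | nil => simp [applyList]
  | cons φ L ih =>
    intro h
    have hφS : φ ∈ S := h φ (List.mem_cons_self)
    have ih' := ih (fun ψ hψ => h ψ (List.mem_cons_of_mem _ hψ))
    have hd2 : (2 : ℝ) ≤ (φ.natDegree : ℝ) := by exact_mod_cast hdeg φ hφS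
    set y := applyList L P with hy
    have happ : applyList (φ :: L) P = φ.eval y := rfl
    have hev := (abs_le.mp (hh φ hφS y)).1
    -- rath (φ.eval y) - C ≥ d * (rath y - C)
    have step : (φ.natDegree : ℝ) * (rath y - C) ≤ rath (φ.eval y) - C := by nlinarith
    rw [happ, List.map_cons, List.prod_cons, mul_assoc]
    calc (φ.natDegree : ℝ) * ((L.map (fun φ => ((φ.natDegree : ℝ)))).prod * (rath P - C))
        ≤ (φ.natDegree : ℝ) * (rath y - C) := by
          apply mul_le_mul_of_nonneg_left ih' (by linarith)
      _ ≤ rath (φ.eval y) - C := step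

theorem stmt0 (S : Set (Polynomial ℚ))
    (hdeg : ∀ φ ∈ S, 2 ≤ φ.natDegree)
    (hheight : ∃ C : ℝ, 0 ≤ C ∧ ∀ φ ∈ S, ∀ x : ℚ,
      |rath (φ.eval x) - (φ.natDegree : ℝ) * rath x| ≤ C)
    (hlogdisc : ∃ δ : ℝ, 0 < δ ∧ ∀ φ ∈ S, ∀ ψ ∈ S, φ ≠ ψ →
      |Real.log (φ.natDegree : ℝ) - Real.log (ψ.natDegree : ℝ)| > δ) :
    ∃ b : ℝ, 0 < b ∧ ∃ B₀ : ℝ, ∀ P : ℚ, ratH P > B₀ →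
      ∃ κ : ℝ, 0 < κ ∧ ∀ B : ℝ, 3 ≤ B →
        (({Q ∈ orb S P | ratH Q ≤ B}).ncard : ℝ) ≤ κ * Real.log B ^ b := by
  classical
  obtain ⟨C, hC0, hC⟩ := hheight
  obtain ⟨δ, hδ0, hδ⟩ := hlogdisc
  have hinj : Set.InjOn Polynomial.natDegree S := by
    intro φ hφ ψ hψ hdeq
    by_contra hne
    have := hδ φ hφ ψ hψ hne
    rw [hdeq] at this
    simp at this
    linarith
  refine ⟨3, by norm_num, Real.exp (C + 1), ?_⟩
  intro P hP
  refine ⟨2, by norm_num, ?_⟩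
  intro B hB
  have hB0 : (0:ℝ) < B := by linarith
  have hX1 : (1:ℝ) ≤ Real.log B := by
    have h3 : (1:ℝ) < Real.log 3 := (Real.lt_log_iff_exp_lt (by norm_num)).mpr
      (lt_of_lt_of_le (Real.exp_one_lt_d9.trans_le (by norm_num)) (le_refl 3))
    have : Real.log 3 ≤ Real.log B := Real.log_le_log (by norm_num) hB
    linarith
  have hX0 : (0:ℝ) < Real.log B := by linarith
  set X := Real.log B with hXdef
  set m := ⌊X⌋₊ with hm
  -- height of P
  have hPh : C + 1 < rath P := by
    have h0 : (0:ℝ) < Real.exp (C + 1) := Real.exp_pos _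
    have := Real.log_lt_log h0 hP
    rwa [Real.log_exp] at this
  -- choice function
  set f : ℚ → List (Polynomial ℚ) := fun Q =>
    if h : ∃ L : List (Polynomial ℚ), (∀ φ ∈ L, φ ∈ S) ∧ applyList L P = Q
    then h.choose else [] with hf
  have hfspec : ∀ Q ∈ orb S P, (∀ φ ∈ f Q, φ ∈ S) ∧ applyList (f Q) P = Q := by
    intro Q hQ
    have hQ' : ∃ L : List (Polynomial ℚ), (∀ φ ∈ L, φ ∈ S) ∧ applyList L P = Q := hQ
    simp only [hf, dif_pos hQ']
    exact hQ'.choose_spec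
  have hmaps : ∀ Q ∈ {Q ∈ orb S P | ratH Q ≤ B}, f Q ∈ Lset S m X := by
    rintro Q ⟨hQorb, hQB⟩
    obtain ⟨hmem, happ⟩ := hfspec Q hQorb
    set L := f Q
    have hgrow := growth S C hC0 hdeg hC P L hmem
    rw [happ] at hgrow
    have hrQ : rath Q ≤ X := by
      have h1 : (1:ℝ) ≤ ratH Q := one_le_ratH Q
      exact Real.log_le_log (by linarith) hQB
    have hp1 : (1:ℝ) ≤ (L.map (fun φ => ((φ.natDegree : ℝ)))).prod := one_le_prod S hdeg L hmem
    have hprodX : (L.map (fun φ => ((φ.natDegree : ℝ)))).prod ≤ X := by nlinarith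
    have hlen : L.length ≤ m := by
      apply Nat.le_floor
      have h2 : (2:ℝ) ^ L.length ≤ (L.map (fun φ => ((φ.natDegree : ℝ)))).prod :=
        prod_ge S hdeg L hmem
      have h3 : (L.length : ℝ) ≤ (2:ℝ) ^ L.length := by
        have := @Nat.lt_two_pow_self L.length
        calc (L.length : ℝ) ≤ ((2^L.length : ℕ) : ℝ) := by exact_mod_cast this.le
          _ = (2:ℝ) ^ L.length := by push_cast; ring
      linarith
    exact ⟨hlen, hmem, hprodX⟩
  have hinjf : Set.InjOn f {Q ∈ orb S P | ratH Q ≤ B} := by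
    rintro Q₁ ⟨h1, _⟩ Q₂ ⟨h2, _⟩ heq
    have e1 := (hfspec Q₁ h1).2
    have e2 := (hfspec Q₂ h2).2
    rw [← e1, ← e2, heq]
  have hfin : (Lset S m X).Finite := (count S hdeg hinj m X).1
  have hle := Set.ncard_le_ncard_of_injOn f hmaps hinjf hfin
  have hbd := (count S hdeg hinj m X).2 hX0
  have hrpow : X ^ (3:ℝ) = X ^ (3:ℕ) := by
    rw [← Real.rpow_natCast X 3]; norm_num
  calc (({Q ∈ orb S P | ratH Q ≤ B}).ncard : ℝ) ≤ ((Lset S m X).ncard : ℝ) := by exact_mod_cast hle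
    _ ≤ 2 * X ^ 3 := hbd
    _ = 2 * X ^ (3:ℝ) := by rw [hrpow]
end

section
/- Let T be a set of positive real numbers with at least two elements that is uniformly discrete with gap δ_T > 0, i.e., |t − t'| > δ_T for all distinct t, t' ∈ T, and let t₁ be the least element of T (which exists). Then there exists a constant c ∈ (0,1), depending only on T, with the following property: for every δ with 0 < δ ≤ δ_T, every positive integer u, every function N : T → ℕ taking positive integer values that satisfies t − δ < N(t)/u < t for all t ∈ T, and every α ∈ (0,1) such that the family (α^{N(t)})_{t ∈ T} is summable with sum equal to 1, one has c^{1/N(t₁)} ≤ α (equivalently, c ≤ α^{N(t₁)}). -/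
theorem stmt7 (T : Set ℝ) (hpos : ∀ t ∈ T, 0 < t) (hnt : T.Nontrivial)
    (δT : ℝ) (hδT : 0 < δT)
    (hdisc : ∀ t ∈ T, ∀ t' ∈ T, t ≠ t' → |t - t'| > δT)
    (t₁ : ℝ) (ht₁ : t₁ ∈ T) (ht₁min : ∀ t ∈ T, t₁ ≤ t) :
    ∃ c : ℝ, 0 < c ∧ c < 1 ∧
      ∀ δ : ℝ, 0 < δ → δ ≤ δT →
      ∀ u : ℕ, 0 < u →
      ∀ N : ℝ → ℕ, (∀ t ∈ T, 0 < N t ∧ t - δ < (N t : ℝ) / u ∧ (N t : ℝ) / u < t) →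
      ∀ α : ℝ, 0 < α → α < 1 →
        Summable (fun t : T => α ^ N (t : ℝ)) →
        (∑' t : T, α ^ N (t : ℝ)) = 1 →
        c ≤ α ^ N t₁ := by
  classical
  have ht₁pos : 0 < t₁ := hpos t₁ ht₁
  set e : ℝ := δT / t₁ with he_def
  have he : 0 < e := div_pos hδT ht₁pos
  set c : ℝ := min (1/5) ((1/2 : ℝ) ^ e⁻¹) with hc_def
  have hc0 : 0 < c := lt_min (by norm_num) (Real.rpow_pos_of_pos (by norm_num) _)
  have hc5 : c ≤ 1/5 := min_le_left _ _
  have hce : c ≤ (1/2 : ℝ) ^ e⁻¹ := min_le_right _ _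
  refine ⟨c, hc0, lt_of_le_of_lt hc5 (by norm_num), ?_⟩
  intro δ hδ hδle u hu N hN α hα0 hα1 hsum htsum
  by_contra hcon
  push_neg at hcon
  set β : ℝ := α ^ N t₁ with hβ_def
  have hβ0 : 0 < β := pow_pos hα0 _
  have hβ1 : β < 1 := pow_lt_one₀ hα0.le hα1 (hN t₁ ht₁).1.ne'
  have hu0 : (0:ℝ) < u := by exact_mod_cast hu
  -- β^e < 1/2
  have hβe : β ^ e < 1/2 := by
    have h1 : β ^ e < ((1/2:ℝ) ^ e⁻¹) ^ e :=
      Real.rpow_lt_rpow hβ0.le (lt_of_lt_of_le hcon hce) he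
    calc β ^ e < ((1/2:ℝ) ^ e⁻¹) ^ e := h1
      _ = (1/2:ℝ) ^ (e⁻¹ * e) := (Real.rpow_mul (by norm_num) _ _).symm
      _ = 1/2 := by rw [inv_mul_cancel₀ he.ne', Real.rpow_one]
  set x : ℝ := α ^ ((u:ℝ) * δT) with hx_def
  have hx0 : 0 < x := Real.rpow_pos_of_pos hα0 _
  -- α^(u t₁) ≤ β
  have hNt₁ : (N t₁ : ℝ) ≤ (u:ℝ) * t₁ := by
    have h := (hN t₁ ht₁).2.2
    rw [div_lt_iff₀ hu0] at h
    linarith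
  have hut : α ^ ((u:ℝ) * t₁) ≤ β := by
    have := Real.rpow_le_rpow_of_exponent_ge hα0 hα1.le hNt₁
    rwa [Real.rpow_natCast] at this
  -- x ≤ β^e
  have hxβ : x ≤ β ^ e := by
    have hxeq : x = (α ^ ((u:ℝ) * t₁)) ^ e := by
      rw [← Real.rpow_mul hα0.le,
        show ((u:ℝ) * t₁) * e = (u:ℝ) * δT by rw [he_def]; field_simp]
    rw [hxeq]
    exact Real.rpow_le_rpow (Real.rpow_nonneg hα0.le _) hut he.le
  have hx12 : x < 1/2 := lt_of_le_of_lt hxβ hβe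
  -- the injection
  set i : T → ℕ := fun t => (⌊((t:ℝ) - t₁) / δT⌋).toNat with hi_def
  have hflr : ∀ t : T, (0:ℤ) ≤ ⌊((t:ℝ) - t₁) / δT⌋ := fun t =>
    Int.floor_nonneg.mpr (div_nonneg (by linarith [ht₁min t t.2]) hδT.le)
  have hinj : Function.Injective i := by
    intro s t hst
    by_contra hne
    have hsv : (s:ℝ) ≠ (t:ℝ) := fun h => hne (Subtype.ext h)
    have hgap := hdisc s s.2 t t.2 hsv
    have hfeq : ⌊((s:ℝ) - t₁) / δT⌋ = ⌊((t:ℝ) - t₁) / δT⌋ := by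
      have h1 := Int.toNat_of_nonneg (hflr s)
      have h2 := Int.toNat_of_nonneg (hflr t)
      simp only [hi_def] at hst
      omega
    have habs : |((s:ℝ) - t₁) / δT - ((t:ℝ) - t₁) / δT| < 1 :=
      Int.abs_sub_lt_one_of_floor_eq_floor hfeq
    have : ((s:ℝ) - t₁) / δT - ((t:ℝ) - t₁) / δT = ((s:ℝ) - (t:ℝ)) / δT := by ring
    rw [this, abs_div, abs_of_pos hδT, div_lt_one hδT] at habs
    linarith
  -- per-element bound
  set t₁' : T := ⟨t₁, ht₁⟩ with ht₁'_def
  set g : ℕ → ℝ := fun k => β * x ^ (k - 1) with hg_def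
  have hg_nonneg : ∀ k, 0 ≤ g k := fun k => mul_nonneg hβ0.le (pow_nonneg hx0.le _)
  have hfg : ∀ t : T, (if t = t₁' then 0 else α ^ N (t:ℝ)) ≤ g (i t) := by
    intro t
    split_ifs with h
    · exact hg_nonneg _
    · have hsv : (t:ℝ) ≠ t₁ := fun hh => h (Subtype.ext hh)
      have hgt : t₁ + δT < (t:ℝ) := by
        have := hdisc t t.2 t₁ ht₁ hsv
        have hle := ht₁min t t.2
        rw [abs_of_nonneg (by linarith)] at this
        linarith
      set k : ℕ := i t with hk_def
      have hk1 : 1 ≤ k := by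
        have h1 : (1:ℤ) ≤ ⌊((t:ℝ) - t₁) / δT⌋ := by
          apply Int.le_floor.mpr
          rw [le_div_iff₀ hδT]
          push_cast
          linarith
        rw [hk_def, hi_def]
        simp only
        omega
      have hkle : (k:ℝ) * δT ≤ (t:ℝ) - t₁ := by
        have h1 : ((k:ℤ):ℝ) ≤ ((t:ℝ) - t₁) / δT := by
          rw [hk_def, hi_def]
          simp only
          rw [Int.toNat_of_nonneg (hflr t)]
          exact Int.floor_le _
        rw [← le_div_iff₀ hδT]
        exact_mod_cast h1
      have hkc : ((k - 1 : ℕ) : ℝ) = (k:ℝ) - 1 := by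
        push_cast [hk1]; ring
      have hNlow : (u:ℝ) * (t₁ + ((k:ℝ) - 1) * δT) ≤ (N (t:ℝ) : ℝ) := by
        have h := (hN t t.2).2.1
        rw [lt_div_iff₀ hu0] at h
        nlinarith [hu0]
      have hmain : α ^ N (t:ℝ) ≤ α ^ ((u:ℝ) * t₁) * x ^ (k - 1) := by
        have h1 : α ^ ((N (t:ℝ) : ℝ)) ≤ α ^ ((u:ℝ) * (t₁ + ((k:ℝ) - 1) * δT)) :=
          Real.rpow_le_rpow_of_exponent_ge hα0 hα1.le hNlow
        rw [Real.rpow_natCast] at h1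
        refine h1.trans_eq ?_
        rw [show (u:ℝ) * (t₁ + ((k:ℝ) - 1) * δT)
              = (u:ℝ) * t₁ + ((k:ℝ) - 1) * ((u:ℝ) * δT) by ring,
          Real.rpow_add hα0]
        congr 1
        rw [← hkc, ← Real.rpow_natCast x, hx_def, ← Real.rpow_mul hα0.le]
        congr 1
        ring
      calc α ^ N (t:ℝ) ≤ α ^ ((u:ℝ) * t₁) * x ^ (k - 1) := hmain
        _ ≤ β * x ^ (k - 1) := by
            apply mul_le_mul_of_nonneg_right hut (pow_nonneg hx0.le _)
  -- summability of g
  have hg_shift : (fun k : ℕ => g (k + 1)) = fun k : ℕ => β * x ^ k := by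
    funext k; simp [hg_def]
  have hg_sum : Summable g := by
    apply (summable_nat_add_iff 1).mp
    rw [hg_shift]
    exact (summable_geometric_of_lt_one hx0.le (by linarith)).mul_left β
  have htg : ∑' k, g k = β + β * (1 - x)⁻¹ := by
    rw [hg_sum.tsum_eq_zero_add, hg_shift, tsum_mul_left,
      tsum_geometric_of_lt_one hx0.le (by linarith)]
    simp [hg_def]
  -- summability of the ite function
  have hite_sum : Summable (fun t : T => if t = t₁' then 0 else α ^ N (t:ℝ)) := by
    apply Summable.of_nonneg_of_le (fun t => ?_) (fun t => ?_) hsum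
    · split_ifs
      · exact le_rfl
      · positivity
    · split_ifs
      · positivity
      · exact le_rfl
  -- split the sum
  have hsplit : (1:ℝ) = β + ∑' t : T, (if t = t₁' then 0 else α ^ N (t:ℝ)) := by
    rw [← htsum, hsum.tsum_eq_add_tsum_ite t₁']
  have hbound : ∑' t : T, (if t = t₁' then 0 else α ^ N (t:ℝ)) ≤ ∑' k, g k :=
    hite_sum.tsum_le_tsum_of_inj i hinj (fun k _ => hg_nonneg k) hfg hg_sum
  -- conclude
  have hinv : (1 - x)⁻¹ ≤ 2 := by
    have h2 : (0:ℝ) < 1 - x := by linarith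
    rw [inv_le_iff_one_le_mul₀ h2]
    linarith
  have hβg : β * (1 - x)⁻¹ ≤ 2 * β := by
    rw [mul_comm β]
    exact mul_le_mul_of_nonneg_right hinv hβ0.le
  rw [htg] at hbound
  linarith
end

section
/- Let k be a field of characteristic zero, let a, b, c ∈ k be nonzero, and let n, m ≥ 2 be integers. If x, y ∈ k[z] satisfy a·x^n + b·y^m = c, then both x and y are constant polynomials. -/
open Polynomial UniqueFactorizationMonoid

theorem stmt8 (k : Type*) [Field k] [CharZero k]
    (a b c : k) (ha : a ≠ 0) (hb : b ≠ 0) (hc : c ≠ 0)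
    (n m : ℕ) (hn : 2 ≤ n) (hm : 2 ≤ m)
    (x y : Polynomial k)
    (heq : C a * x ^ n + C b * y ^ m = C c) :
    x.natDegree = 0 ∧ y.natDegree = 0 := by
  classical
  -- degenerate cases
  by_cases hx0 : x = 0
  · subst hx0
    simp only [zero_pow (by omega : n ≠ 0), mul_zero, zero_add] at heq
    have hy : (y ^ m).natDegree = 0 := by
      have h2 : C b * y ^ m = C b * C (b⁻¹ * c) := by
        rw [heq, ← map_mul, mul_inv_cancel_left₀ hb]
      have : y ^ m = C (b⁻¹ * c) := mul_left_cancel₀ (by simpa using hb) h2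
      rw [this, natDegree_C]
    simp [natDegree_pow] at hy
    exact ⟨natDegree_zero, by omega⟩
  by_cases hy0 : y = 0
  · subst hy0
    simp only [zero_pow (by omega : m ≠ 0), mul_zero, add_zero] at heq
    have hx : (x ^ n).natDegree = 0 := by
      have h2 : C a * x ^ n = C a * C (a⁻¹ * c) := by
        rw [heq, ← map_mul, mul_inv_cancel_left₀ ha]
      have : x ^ n = C (a⁻¹ * c) := mul_left_cancel₀ (by simpa using ha) h2
      rw [this, natDegree_C]
    simp [natDegree_pow] at hx
    exact ⟨by omega, natDegree_zero⟩
  set A : Polynomial k := C a * x ^ n with hA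
  set B : Polynomial k := C b * y ^ m with hB
  have hAne : A ≠ 0 := mul_ne_zero (by simpa using ha) (pow_ne_zero _ hx0)
  have hBne : B ≠ 0 := mul_ne_zero (by simpa using hb) (pow_ne_zero _ hy0)
  have hCne : (-C c : Polynomial k) ≠ 0 := by simpa using hc
  have hsum : A + B + (-C c) = 0 := by rw [hA, hB]; linear_combination heq
  have hAB : IsCoprime A B :=
    ⟨C c⁻¹, C c⁻¹, by rw [← mul_add, heq, ← map_mul, inv_mul_cancel₀ hc, map_one]⟩
  have hCunit : IsUnit (-C c : Polynomial k) := by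
    refine IsUnit.neg ?_
    exact isUnit_C.mpr (isUnit_iff_ne_zero.mpr hc)
  have hCA : IsCoprime (-C c : Polynomial k) A :=
    ⟨-C c⁻¹, 0, by rw [zero_mul, add_zero, neg_mul_neg, ← map_mul, inv_mul_cancel₀ hc, map_one]⟩
  have hBC : IsCoprime B (-C c : Polynomial k) := isCoprime_comm.mp
    ⟨-C c⁻¹, 0, by rw [zero_mul, add_zero, neg_mul_neg, ← map_mul, inv_mul_cancel₀ hc, map_one]⟩
  have := Polynomial.abc hAne hBne hCne hAB hsum
  rcases this with ⟨h1, h2, _⟩ | ⟨hd1, hd2, _⟩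
  · exfalso
    -- compute radical
    have hxy : IsCoprime (x ^ n) (y ^ m) := by
      have := (isCoprime_mul_unit_left_left (isUnit_C.mpr (isUnit_iff_ne_zero.mpr ha)) _ _).mp
        ((isCoprime_mul_unit_left_right (isUnit_C.mpr (isUnit_iff_ne_zero.mpr hb)) _ _).mp hAB)
      exact this
    have hassoc : Associated (A * B * -C c) (x ^ n * y ^ m) := by
      have : A * B * -C c = (C a * C b * (-C c)) * (x ^ n * y ^ m) := by ring
      rw [this]
      exact associated_unit_mul_left _ _
        (((isUnit_C.mpr (isUnit_iff_ne_zero.mpr ha)).mul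
          (isUnit_C.mpr (isUnit_iff_ne_zero.mpr hb))).mul hCunit)
    have hrad : radical (A * B * -C c) = radical x * radical y := by
      rw [radical_eq_of_associated hassoc, UniqueFactorizationMonoid.radical_mul hxy.isRelPrime,
        radical_pow x (by omega : n ≠ 0), radical_pow y (by omega : m ≠ 0)]
    have hdegrx : (radical x).natDegree ≤ x.natDegree :=
      natDegree_le_of_dvd (radical_dvd_self (a := x)) hx0
    have hdegry : (radical y).natDegree ≤ y.natDegree :=
      natDegree_le_of_dvd (radical_dvd_self (a := y)) hy0
    have hradne : radical x ≠ 0 := radical_ne_zero (a := x)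
    have hradne' : radical y ≠ 0 := radical_ne_zero (a := y)
    have hradd : (radical x * radical y).natDegree ≤ x.natDegree + y.natDegree := by
      rw [natDegree_mul hradne hradne']; omega
    have hAdeg : A.natDegree = n * x.natDegree := by
      rw [hA, natDegree_mul (by simpa using ha) (pow_ne_zero _ hx0), natDegree_C,
        natDegree_pow]; omega
    have hBdeg : B.natDegree = m * y.natDegree := by
      rw [hB, natDegree_mul (by simpa using hb) (pow_ne_zero _ hy0), natDegree_C,
        natDegree_pow]; omega
    rw [hrad] at h1 h2
    have e1 : n * x.natDegree + 1 ≤ x.natDegree + y.natDegree := by omega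
    have e2 : m * y.natDegree + 1 ≤ x.natDegree + y.natDegree := by omega
    have : 2 * x.natDegree ≤ n * x.natDegree := Nat.mul_le_mul_right _ hn
    have : 2 * y.natDegree ≤ m * y.natDegree := Nat.mul_le_mul_right _ hm
    omega
  · -- derivative case
    have hax : derivative (x ^ n) = 0 := by
      have := hd1
      rw [hA, derivative_C_mul] at this
      have hCa : (C a : Polynomial k) ≠ 0 := by simpa using ha
      exact (mul_eq_zero.mp this).resolve_left hCa
    have hby : derivative (y ^ m) = 0 := by
      have := hd2
      rw [hB, derivative_C_mul] at this
      have hCb : (C b : Polynomial k) ≠ 0 := by simpa using hb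
      exact (mul_eq_zero.mp this).resolve_left hCb
    have hxdeg : (x ^ n).natDegree = 0 := natDegree_eq_zero_of_derivative_eq_zero hax
    have hydeg : (y ^ m).natDegree = 0 := natDegree_eq_zero_of_derivative_eq_zero hby
    rw [natDegree_pow] at hxdeg hydeg
    constructor <;> [exact Nat.mul_eq_zero.mp hxdeg |>.resolve_left (by omega);
      exact Nat.mul_eq_zero.mp hydeg |>.resolve_left (by omega)]
end
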